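/- Let n ≥ 1, let f ∈ ℂ[x_0,…,x_n] be a homogeneous polynomial of degree d ≥ 1, and let y ∈ ℂ^{n+1} be a nonzero vector. Then all partial derivatives ∂f/∂x_0, …, ∂f/∂x_n vanish at y if and only if f belongs to the square P_y² of the ideal P_y ⊆ ℂ[x_0,…,x_n] consisting of all polynomials that vanish at every scalar multiple of y (the homogeneous vanishing ideal of the point [y] ∈ ℙ^n). -/

import Mathlib

/-!
If `f` is singular at `y`, Euler's identity gives `f(y) = 0`, so by homogeneity `f` and all
`∂ᵢf` vanish on the line `ℂ·y`. Choose `k` with `y k ≠ 0` and let `π` be the substitution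
`Xⱼ ↦ (yⱼ / yₖ) Xₖ`, which sends every polynomial to its restriction to the line. The
first-order Taylor expansion `f ≡ π f + ∑ᵢ (Xᵢ - π Xᵢ) π(∂ᵢf)` holds modulo the square of any
ideal containing the linear forms `Xᵢ - π Xᵢ`; these lie in `P_y`, and `π` kills `P_y`, so
`f ∈ P_y²`. Conversely the Leibniz rule shows that every element of `P_y²` is singular at `y`.
-/

open MvPolynomial

/-- `f` is singular at the point `y ∈ ℂ^{n+1}`: all partial derivatives vanish at `y`. -/
def SingularAt {n : ℕ} (f : MvPolynomial (Fin (n+1)) ℂ) (y : Fin (n+1) → ℂ) : Prop :=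
  ∀ i, MvPolynomial.eval y (MvPolynomial.pderiv i f) = 0

/-- The homogeneous vanishing ideal `P_y` of the point `[y] ∈ ℙⁿ`: all polynomials
vanishing at every scalar multiple of `y`. -/
noncomputable def vanishingIdealLine {n : ℕ} (y : Fin (n+1) → ℂ) :
    Ideal (MvPolynomial (Fin (n+1)) ℂ) where
  carrier := {g | ∀ t : ℂ, MvPolynomial.eval (t • y) g = 0}
  zero_mem' := by intro t; simp
  add_mem' := by intro a b ha hb t; simp [map_add, ha t, hb t]
  smul_mem' := by intro c g hg t; simp [smul_eq_mul, map_mul, hg t]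

namespace MvPolynomial

variable {R σ : Type*}

theorem IsHomogeneous.eval_smul [CommSemiring R] [Fintype σ] {φ : MvPolynomial σ R} {n : ℕ}
    (hφ : φ.IsHomogeneous n) (t : R) (y : σ → R) :
    eval (t • y) φ = t ^ n * eval y φ := by
  simp only [eval_eq', Finset.mul_sum, Pi.smul_apply, smul_eq_mul, mul_pow,
    Finset.prod_mul_distrib, Finset.prod_pow_eq_pow_sum]
  refine Finset.sum_congr rfl fun s hs => ?_
  have hdeg : ∑ i, s i = n := by
    rw [← hφ (mem_support_iff.mp hs), Finsupp.weight_apply, Finsupp.sum_fintype] <;> simp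
  rw [hdeg]
  ring

theorem IsHomogeneous.eval_eq_zero_of_forall_eval_pderiv_eq_zero [CommRing R] [IsDomain R]
    [CharZero R] [Fintype σ] {φ : MvPolynomial σ R} {n : ℕ} (hφ : φ.IsHomogeneous n)
    (hn : n ≠ 0) {y : σ → R} (hy : ∀ i, eval y (pderiv i φ) = 0) :
    eval y φ = 0 := by
  have euler := congrArg (eval y) hφ.sum_X_mul_pderiv
  simp only [map_sum, map_mul, hy, mul_zero, Finset.sum_const_zero, map_nsmul] at euler
  exact (smul_eq_zero.mp euler.symm).resolve_left hn

theorem eval_aeval [CommSemiring R] (g : σ → MvPolynomial σ R) (x : σ → R)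
    (p : MvPolynomial σ R) :
    eval x (aeval g p) = eval (fun j => eval x (g j)) p := by
  rw [aeval_eq_bind₁]
  exact eval₂Hom_bind₁ _ _ _ _

theorem eval_pderiv_eq_zero_of_mem_sq [CommSemiring R] {I : Ideal (MvPolynomial σ R)}
    {y : σ → R} (hI : ∀ a ∈ I, eval y a = 0) {p : MvPolynomial σ R} (hp : p ∈ I ^ 2) (i : σ) :
    eval y (pderiv i p) = 0 := by
  rw [pow_two] at hp
  refine Submodule.mul_induction_on hp (fun a ha b hb => ?_) fun p q hp hq => ?_
  · simp [hI a ha, hI b hb]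
  · rw [map_add, map_add, hp, hq, add_zero]

/-- First-order Taylor expansion of `p` around the substitution `g`. -/
theorem sub_aeval_sub_sum_mem_sq [CommRing R] [Fintype σ] {J : Ideal (MvPolynomial σ R)}
    (g : σ → MvPolynomial σ R) (hg : ∀ i, X i - g i ∈ J) (p : MvPolynomial σ R) :
    p - aeval g p - ∑ i, (X i - g i) * aeval g (pderiv i p) ∈ J ^ 2 := by
  induction p using MvPolynomial.induction_on with
  | C a => simp
  | add p q hp hq =>
    convert add_mem hp hq using 1
    simp only [map_add, mul_add, Finset.sum_add_distrib]
    ring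
  | mul_X p j hp =>
    classical
    have hlin : ∑ i, (X i - g i) * aeval g (pderiv i p) ∈ J :=
      Ideal.sum_mem _ fun i _ => Ideal.mul_mem_right _ _ (hg i)
    have hsum : ∑ i, (X i - g i) * aeval g (pderiv i (p * X j)) =
        (∑ i, (X i - g i) * aeval g (pderiv i p)) * g j + (X j - g j) * aeval g p := by
      simp only [pderiv_mul, map_add, map_mul, mul_add, Finset.sum_add_distrib, Finset.sum_mul,
        mul_assoc]
      simp [pderiv_X, Pi.single_apply]
    rw [map_mul, aeval_X, hsum]
    convert add_mem (Ideal.mul_mem_right (X j) _ hp)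
      (pow_two J ▸ Ideal.mul_mem_mul (hg j) hlin) using 1
    ring

end MvPolynomial

section VanishingIdealLine

variable {n : ℕ} {y : Fin (n+1) → ℂ}

theorem mem_vanishingIdealLine_of_isHomogeneous {φ : MvPolynomial (Fin (n+1)) ℂ} {d : ℕ}
    (hφ : φ.IsHomogeneous d) (hy : eval y φ = 0) : φ ∈ vanishingIdealLine y :=
  fun t => by rw [hφ.eval_smul, hy, mul_zero]

theorem X_sub_C_div_mul_X_mem_vanishingIdealLine {k : Fin (n+1)} (hk : y k ≠ 0)
    (j : Fin (n+1)) : X j - C (y j / y k) * X k ∈ vanishingIdealLine y := fun t => by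
  simp only [map_sub, map_mul, eval_X, eval_C, Pi.smul_apply, smul_eq_mul]
  field_simp
  ring

theorem aeval_C_div_mul_X_eq_zero_of_mem_vanishingIdealLine (k : Fin (n+1))
    {p : MvPolynomial (Fin (n+1)) ℂ} (hp : p ∈ vanishingIdealLine y) :
    aeval (fun j => C (y j / y k) * X k) p = 0 :=
  MvPolynomial.funext fun x => by
    have hline : (fun j => eval x (C (y j / y k) * X k)) = (x k / y k) • y := by
      ext j
      simp only [map_mul, eval_C, eval_X, Pi.smul_apply, smul_eq_mul]
      ring
    rw [eval_aeval, hline, hp, map_zero]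

end VanishingIdealLine

theorem singularAt_iff_mem_sq_vanishingIdeal_general (n d : ℕ) (hd : 1 ≤ d)
    (f : MvPolynomial (Fin (n+1)) ℂ) (hf : f.IsHomogeneous d)
    (y : Fin (n+1) → ℂ) (hy : y ≠ 0) :
    SingularAt f y ↔ f ∈ (vanishingIdealLine y) ^ 2 := by
  refine ⟨fun hsing => ?_, fun hmem i => ?_⟩
  · obtain ⟨k, hk⟩ := Function.ne_iff.mp hy
    have hfy : eval y f = 0 :=
      hf.eval_eq_zero_of_forall_eval_pderiv_eq_zero (by omega) hsing
    have hkill : ∀ p ∈ vanishingIdealLine y, aeval (fun j => C (y j / y k) * X k) p = 0 :=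
      fun _ => aeval_C_div_mul_X_eq_zero_of_mem_vanishingIdealLine k
    have taylor := sub_aeval_sub_sum_mem_sq _
      (X_sub_C_div_mul_X_mem_vanishingIdealLine hk) f
    rwa [hkill f (mem_vanishingIdealLine_of_isHomogeneous hf hfy),
      Finset.sum_eq_zero fun i _ => by
        rw [hkill _ (mem_vanishingIdealLine_of_isHomogeneous hf.pderiv (hsing i)), mul_zero],
      sub_zero, sub_zero] at taylor
  · exact eval_pderiv_eq_zero_of_mem_sq (fun a ha => by simpa using ha 1) hmem i

/-- A homogeneous polynomial `f` of degree `d ≥ 1` is singular at a nonzero vector `y` if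
and only if `f` lies in the square of the homogeneous vanishing ideal of `[y] ∈ ℙⁿ`. -/
theorem singularAt_iff_mem_sq_vanishingIdeal (n d : ℕ) (hn : 1 ≤ n) (hd : 1 ≤ d)
    (f : MvPolynomial (Fin (n+1)) ℂ) (hf : f.IsHomogeneous d)
    (y : Fin (n+1) → ℂ) (hy : y ≠ 0) :
    SingularAt f y ↔ f ∈ (vanishingIdealLine y) ^ 2 :=
  singularAt_iff_mem_sq_vanishingIdeal_general n d hd f hf y hy
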